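/- Consider horizon T ≥ 1 and the COLDQ setup with strongly convex losses: 𝒳 ⊆ ℝ^p convex with ‖x − y‖ ≤ R for all x, y ∈ 𝒳 (R > 0); for some μ > 0 and all t, the loss f_t : 𝒳 → ℝ admits a gradient/subgradient map ∇f_t with ‖∇f_t(x)‖ ≤ D and f_t(y) ≥ f_t(x) + ⟨∇f_t(x), y − x⟩ + μ·‖y − x‖² for all x, y ∈ 𝒳; convex constraints g_t^n with |g_t^n(x)| ≤ G on 𝒳; step sizes α_t = μ·t; nonnegative queues Q_{t−1}^n ≥ 0; x_1 ∈ 𝒳 arbitrary, and for t ∈ {2,…,T}: x_t minimizes Φ_t(x) = ⟨∇f_{t−1}(x_{t−1}), x − x_{t−1}⟩ + α_{t−1}·‖x − x_{t−1}‖² + Σ_{n=1}^N Q_{t−1}^n·[g_{t−1}^n(x)]_+ over 𝒳. Let x* ∈ 𝒳 satisfy g_t^n(x*) ≤ 0 for all t, n. Then the static regret satisfies Σ_{t=1}^T [f_t(x_t) − f_t(x*)] ≤ (D²/(4μ))·Σ_{t=1}^T (1/t) + D·R ≤ (D²/(4μ))·(1 + ln T) + D·R. -/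

import Mathlib

/-!
Each iterate `x (t + 1)` minimizes a `2 α t`-strongly convex function (linearized loss, proximal
term and convex queue penalty), so comparing it with `x*` gains `α t ‖x* - x (t + 1)‖²`. The
penalty vanishes at the feasible `x*` and is nonnegative at `x (t + 1)`; together with the
`μ`-strong convexity of `f t` and Young's inequality `⟪c, v⟫ - α ‖v‖² ≤ ‖c‖² / (4 α)`, round
`t < T` costs at most `D² / (4 μ t) + μ (t - 1) ‖x* - x t‖² - μ t ‖x* - x (t + 1)‖²`. These
bounds telescope, the last round costs at most `D R`, and the harmonic sum is at most `1 + log T`.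
-/

open scoped RealInnerProductSpace

open Filter Topology

lemma le_of_forall_Ioc_le_add_mul {a b c : ℝ} (h : ∀ l ∈ Set.Ioc (0 : ℝ) 1, a ≤ b + l * c) :
    a ≤ b := by
  have hcont : Continuous fun l : ℝ => b + l * c := by fun_prop
  have hlim : Tendsto (fun l : ℝ => b + l * c) (𝓝[>] 0) (𝓝 b) :=
    tendsto_nhdsWithin_of_tendsto_nhds (hcont.tendsto' 0 b (by simp))
  exact ge_of_tendsto hlim (eventually_of_mem (Ioc_mem_nhdsGT one_pos) h)

section InnerProductSpace

variable {E : Type*} [NormedAddCommGroup E] [InnerProductSpace ℝ E]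

lemma StrongConvexOn.add_sq_le_of_isMinOn {s : Set E} {m : ℝ} {f : E → ℝ} {u y : E}
    (hf : StrongConvexOn s m f) (hmin : IsMinOn f s u) (hu : u ∈ s) (hy : y ∈ s) :
    f u + m / 2 * ‖y - u‖ ^ 2 ≤ f y := by
  -- compare `u` with the points `(1 - l) • u + l • y` and let `l → 0`
  refine le_of_forall_Ioc_le_add_mul (c := m / 2 * ‖y - u‖ ^ 2) fun l ⟨hl0, hl1⟩ => ?_
  have hconv := hf.2 hu hy (sub_nonneg.2 hl1) hl0.le (sub_add_cancel 1 l)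
  have hle := isMinOn_iff.1 hmin _ (hf.1 hu hy (sub_nonneg.2 hl1) hl0.le (sub_add_cancel 1 l))
  rw [norm_sub_rev, smul_eq_mul, smul_eq_mul] at hconv
  have hpos : 0 ≤ l * (f y - f u - (1 - l) * (m / 2 * ‖y - u‖ ^ 2)) := by nlinarith
  linarith [(mul_nonneg_iff_of_pos_left hl0).1 hpos]

lemma strongConvexOn_mul_norm_sub_sq {s : Set E} (hs : Convex ℝ s) (A : ℝ) (a : E) :
    StrongConvexOn s (2 * A) fun z => A * ‖z - a‖ ^ 2 := by
  refine ⟨hs, fun x _ y _ p q hp hq hpq => le_of_eq ?_⟩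
  obtain rfl := eq_sub_of_add_eq hpq
  dsimp only
  have hz : (1 - q) • x + q • y - a = (1 - q) • (x - a) + q • (y - a) := by module
  have hxy : x - y = (x - a) - (y - a) := by abel
  rw [hz, hxy]
  generalize x - a = X
  generalize y - a = Y
  rw [norm_add_sq_real, norm_sub_sq_real, norm_smul, norm_smul, real_inner_smul_left,
    real_inner_smul_right, Real.norm_of_nonneg hp, Real.norm_of_nonneg hq, smul_eq_mul,
    smul_eq_mul]
  ring

lemma convexOn_inner_sub {s : Set E} (hs : Convex ℝ s) (c a : E) :
    ConvexOn ℝ s fun z => ⟪c, z - a⟫ := by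
  refine ⟨hs, fun x _ y _ p q _ _ hpq => le_of_eq ?_⟩
  obtain rfl := eq_sub_of_add_eq' hpq
  simp only [smul_eq_mul, inner_sub_right, inner_add_right, real_inner_smul_right]
  ring

lemma strongConvexOn_inner_sub_add_mul_norm_sub_sq_add {s : Set E} (hs : Convex ℝ s) (c a : E)
    (A : ℝ) {h : E → ℝ} (hh : ConvexOn ℝ s h) :
    StrongConvexOn s (2 * A) fun z => ⟪c, z - a⟫ + A * ‖z - a‖ ^ 2 + h z := by
  have := (strongConvexOn_mul_norm_sub_sq hs A a).add
    (uniformConvexOn_zero.2 ((convexOn_inner_sub hs c a).add hh))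
  rw [add_zero] at this
  unfold StrongConvexOn
  convert this using 1
  funext z
  simp only [Pi.add_apply]
  ring

lemma convexOn_sum_mul_max_zero {ι : Type*} [Fintype ι] {s : Set E} (hs : Convex ℝ s)
    {Q : ι → ℝ} {g : ι → E → ℝ} (hQ : ∀ n, 0 ≤ Q n) (hg : ∀ n, ConvexOn ℝ s (g n)) :
    ConvexOn ℝ s fun z => ∑ n, Q n * max (g n z) 0 := by
  have := Finset.sum_induction (s := Finset.univ) (fun n z => Q n * max (g n z) 0) (ConvexOn ℝ s)
    (fun _ _ => ConvexOn.add) (convexOn_const 0 hs)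
    fun n _ => ((hg n).sup (convexOn_const 0 hs)).smul (hQ n)
  simpa only [Finset.sum_fn] using this

lemma inner_sub_mul_norm_sq_le (c v : E) {A : ℝ} (hA : 0 < A) :
    ⟪c, v⟫ - A * ‖v‖ ^ 2 ≤ ‖c‖ ^ 2 / (4 * A) := by
  have hsq := norm_sub_sq_real c ((2 * A) • v)
  rw [norm_smul, real_inner_smul_right, Real.norm_of_nonneg (by positivity)] at hsq
  rw [le_div_iff₀ (by positivity)]
  nlinarith [norm_nonneg (c - (2 * A) • v)]

lemma one_round_regret_le {ι : Type*} [Fintype ι] {s : Set E} (hs : Convex ℝ s)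
    {F : E → ℝ} {c u v w : E} {μ α D : ℝ} {Q : ι → ℝ} {g : ι → E → ℝ}
    (hα : 0 < α) (hQ : ∀ n, 0 ≤ Q n) (hg : ∀ n, ConvexOn ℝ s (g n))
    (hv : v ∈ s) (hw : w ∈ s) (hc : ‖c‖ ≤ D)
    (hF : F u + ⟪c, w - u⟫ + μ * ‖w - u‖ ^ 2 ≤ F w) (hgw : ∀ n, g n w ≤ 0)
    (hmin : IsMinOn (fun z => ⟪c, z - u⟫ + α * ‖z - u‖ ^ 2 + ∑ n, Q n * max (g n z) 0) s v) :
    F u - F w ≤ D ^ 2 / (4 * α) + (α - μ) * ‖w - u‖ ^ 2 - α * ‖w - v‖ ^ 2 := by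
  have hthree := (strongConvexOn_inner_sub_add_mul_norm_sub_sq_add hs c u α
    (convexOn_sum_mul_max_zero hs hQ hg)).add_sq_le_of_isMinOn hmin hv hw
  have hpen_w : ∑ n, Q n * max (g n w) 0 = 0 :=
    Finset.sum_eq_zero fun n _ => by rw [max_eq_right (hgw n), mul_zero]
  have hpen_v : 0 ≤ ∑ n, Q n * max (g n v) 0 :=
    Finset.sum_nonneg fun n _ => mul_nonneg (hQ n) (le_max_right _ _)
  have hyoung := inner_sub_mul_norm_sq_le (-c) (v - u) hα
  rw [inner_neg_left, norm_neg] at hyoung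
  have hcD : ‖c‖ ^ 2 / (4 * α) ≤ D ^ 2 / (4 * α) := by gcongr
  linarith

lemma sub_le_mul_of_add_inner_le {F : E → ℝ} {c u w : E} {μ D R : ℝ} (hμ : 0 ≤ μ)
    (hF : F u + ⟪c, w - u⟫ + μ * ‖w - u‖ ^ 2 ≤ F w) (hc : ‖c‖ ≤ D) (hwu : ‖w - u‖ ≤ R) :
    F u - F w ≤ D * R := by
  have hcs : -⟪c, w - u⟫ ≤ D * R := by
    calc -⟪c, w - u⟫ = ⟪-c, w - u⟫ := (inner_neg_left _ _).symm
      _ ≤ ‖-c‖ * ‖w - u‖ := real_inner_le_norm _ _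
      _ ≤ D * R := by
        rw [norm_neg]
        exact mul_le_mul hc hwu (norm_nonneg _) ((norm_nonneg c).trans hc)
  nlinarith [sq_nonneg ‖w - u‖]

end InnerProductSpace

lemma sum_Icc_le_of_le_one_div_sub {a b : ℕ → ℝ} {K L : ℝ} {T : ℕ} (hT : 1 ≤ T) (hK : 0 ≤ K)
    (hstep : ∀ t ∈ Finset.Ico 1 T, a t ≤ K * (1 / t) - (b (t + 1) - b t))
    (hlast : a T ≤ L) (hb : b 1 ≤ b T) :
    ∑ t ∈ Finset.Icc 1 T, a t ≤ K * ∑ t ∈ Finset.Icc 1 T, (1 / (t : ℝ)) + L := by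
  have hsub : ∑ t ∈ Finset.Ico 1 T, (1 / (t : ℝ)) ≤ ∑ t ∈ Finset.Icc 1 T, (1 / (t : ℝ)) :=
    Finset.sum_le_sum_of_subset_of_nonneg Finset.Ico_subset_Icc_self fun _ _ _ => by positivity
  rw [← Finset.Ico_add_one_right_eq_Icc, Finset.sum_Ico_succ_top hT]
  calc ∑ t ∈ Finset.Ico 1 T, a t + a T
      ≤ ∑ t ∈ Finset.Ico 1 T, (K * (1 / t) - (b (t + 1) - b t)) + L :=
        add_le_add (Finset.sum_le_sum hstep) hlast
    _ = K * ∑ t ∈ Finset.Ico 1 T, (1 / (t : ℝ)) - (b T - b 1) + L := by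
        rw [Finset.sum_sub_distrib, ← Finset.mul_sum, Finset.sum_Ico_sub b hT]
    _ ≤ K * ∑ t ∈ Finset.Icc 1 T, (1 / (t : ℝ)) + L := by
        nlinarith [mul_le_mul_of_nonneg_left hsub hK]

lemma sum_Icc_one_div_le_one_add_log (n : ℕ) :
    ∑ t ∈ Finset.Icc 1 n, (1 / (t : ℝ)) ≤ 1 + Real.log n := by
  simpa [harmonic_eq_sum_Icc] using harmonic_le_one_add_log n

theorem coldq_log_static_regret_strongly_convex_general
    (p N T : ℕ) (hT : 1 ≤ T) (R D μ : ℝ)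
    (hμ : 0 < μ)
    (𝒳 : Set (EuclideanSpace ℝ (Fin p)))
    (hXconv : Convex ℝ 𝒳)
    (hXbdd : ∀ x ∈ 𝒳, ∀ y ∈ 𝒳, ‖x - y‖ ≤ R)
    (f : ℕ → EuclideanSpace ℝ (Fin p) → ℝ)
    (gradf : ℕ → EuclideanSpace ℝ (Fin p) → EuclideanSpace ℝ (Fin p))
    (hgradD : ∀ t, ∀ x ∈ 𝒳, ‖gradf t x‖ ≤ D)
    (hstrong : ∀ t, ∀ x ∈ 𝒳, ∀ y ∈ 𝒳,
      f t x + ⟪gradf t x, y - x⟫ + μ * ‖y - x‖ ^ 2 ≤ f t y)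
    (g : ℕ → Fin N → EuclideanSpace ℝ (Fin p) → ℝ)
    (hgconv : ∀ t n, ConvexOn ℝ 𝒳 (g t n))
    (α : ℕ → ℝ) (hα : ∀ t, α t = μ * t)
    (Q : ℕ → Fin N → ℝ) (hQnn : ∀ t n, 0 ≤ Q t n)
    (x : ℕ → EuclideanSpace ℝ (Fin p)) (hx1 : x 1 ∈ 𝒳)
    (hxX : ∀ t, 2 ≤ t → t ≤ T → x t ∈ 𝒳)
    (hxmin : ∀ t, 2 ≤ t → t ≤ T → ∀ y ∈ 𝒳,
      ⟪gradf (t - 1) (x (t - 1)), x t - x (t - 1)⟫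
          + α (t - 1) * ‖x t - x (t - 1)‖ ^ 2
          + ∑ n, Q (t - 1) n * max (g (t - 1) n (x t)) 0 ≤
        ⟪gradf (t - 1) (x (t - 1)), y - x (t - 1)⟫
          + α (t - 1) * ‖y - x (t - 1)‖ ^ 2
          + ∑ n, Q (t - 1) n * max (g (t - 1) n y) 0)
    (xstar : EuclideanSpace ℝ (Fin p)) (hxstarX : xstar ∈ 𝒳)
    (hxstarfeas : ∀ t, 1 ≤ t → t ≤ T → ∀ n, g t n xstar ≤ 0) :
    ∑ t ∈ Finset.Icc 1 T, (f t (x t) - f t xstar) ≤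
        (D ^ 2 / (4 * μ)) * ∑ t ∈ Finset.Icc 1 T, (1 / (t : ℝ)) + D * R ∧
      (D ^ 2 / (4 * μ)) * ∑ t ∈ Finset.Icc 1 T, (1 / (t : ℝ)) + D * R ≤
        (D ^ 2 / (4 * μ)) * (1 + Real.log T) + D * R := by
  have hx : ∀ t, 1 ≤ t → t ≤ T → x t ∈ 𝒳 := fun t h1 h2 => by
    rcases (by omega : t = 1 ∨ 2 ≤ t) with rfl | h
    exacts [hx1, hxX t h h2]
  have hK : 0 ≤ D ^ 2 / (4 * μ) := by positivity
  -- the weight `α t - μ` of `‖x* - x t‖²` in round `t` equals its weight `α (t - 1)` in round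
  -- `t - 1`, so the per-round bounds telescope
  set b : ℕ → ℝ := fun t => μ * ((t : ℝ) - 1) * ‖xstar - x t‖ ^ 2
  have hstep : ∀ t ∈ Finset.Ico 1 T,
      f t (x t) - f t xstar ≤ D ^ 2 / (4 * μ) * (1 / t) - (b (t + 1) - b t) := by
    intro t ht
    obtain ⟨h1, h2⟩ := Finset.mem_Ico.1 ht
    have hmin := hxmin (t + 1) (by omega) (by omega)
    simp only [Nat.add_sub_cancel, hα] at hmin
    have := one_round_regret_le hXconv (by positivity) (hQnn t) (hgconv t)
      (hxX (t + 1) (by omega) (by omega)) hxstarX (hgradD t _ (hx t h1 h2.le))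
      (hstrong t _ (hx t h1 h2.le) xstar hxstarX) (hxstarfeas t h1 h2.le) (isMinOn_iff.2 hmin)
    convert this using 1
    simp only [b]
    field_simp
    push_cast
    ring
  have hlast := sub_le_mul_of_add_inner_le hμ.le (hstrong T _ (hx T hT le_rfl) xstar hxstarX)
    (hgradD T _ (hx T hT le_rfl)) (hXbdd _ hxstarX _ (hx T hT le_rfl))
  refine ⟨sum_Icc_le_of_le_one_div_sub hT hK hstep hlast ?_, ?_⟩
  · have hT' : (1 : ℝ) ≤ T := by exact_mod_cast hT
    simp only [b, Nat.cast_one, sub_self, mul_zero, zero_mul]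
    exact mul_nonneg (mul_nonneg hμ.le (by linarith)) (sq_nonneg _)
  · gcongr
    exact sum_Icc_one_div_le_one_add_log T

/-- Corollary 2 (regret part): COLDQ with `α_t = μ·t` achieves `O(log T)` static
regret for `μ`-strongly convex losses, with explicit constants. -/
theorem coldq_log_static_regret_strongly_convex
    (p N T : ℕ) (hT : 1 ≤ T) (R D G μ : ℝ)
    (hR : 0 < R) (hμ : 0 < μ)
    (𝒳 : Set (EuclideanSpace ℝ (Fin p)))
    (hXconv : Convex ℝ 𝒳)
    (hXbdd : ∀ x ∈ 𝒳, ∀ y ∈ 𝒳, ‖x - y‖ ≤ R)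
    (f : ℕ → EuclideanSpace ℝ (Fin p) → ℝ)
    (gradf : ℕ → EuclideanSpace ℝ (Fin p) → EuclideanSpace ℝ (Fin p))
    (hgradD : ∀ t, ∀ x ∈ 𝒳, ‖gradf t x‖ ≤ D)
    (hstrong : ∀ t, ∀ x ∈ 𝒳, ∀ y ∈ 𝒳,
      f t x + ⟪gradf t x, y - x⟫ + μ * ‖y - x‖ ^ 2 ≤ f t y)
    (g : ℕ → Fin N → EuclideanSpace ℝ (Fin p) → ℝ)
    (hgconv : ∀ t n, ConvexOn ℝ 𝒳 (g t n))
    (hgG : ∀ t n, ∀ x ∈ 𝒳, |g t n x| ≤ G)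
    (α : ℕ → ℝ) (hα : ∀ t, α t = μ * t)
    (Q : ℕ → Fin N → ℝ) (hQnn : ∀ t n, 0 ≤ Q t n)
    (x : ℕ → EuclideanSpace ℝ (Fin p)) (hx1 : x 1 ∈ 𝒳)
    (hxX : ∀ t, 2 ≤ t → t ≤ T → x t ∈ 𝒳)
    (hxmin : ∀ t, 2 ≤ t → t ≤ T → ∀ y ∈ 𝒳,
      ⟪gradf (t - 1) (x (t - 1)), x t - x (t - 1)⟫
          + α (t - 1) * ‖x t - x (t - 1)‖ ^ 2
          + ∑ n, Q (t - 1) n * max (g (t - 1) n (x t)) 0 ≤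
        ⟪gradf (t - 1) (x (t - 1)), y - x (t - 1)⟫
          + α (t - 1) * ‖y - x (t - 1)‖ ^ 2
          + ∑ n, Q (t - 1) n * max (g (t - 1) n y) 0)
    (xstar : EuclideanSpace ℝ (Fin p)) (hxstarX : xstar ∈ 𝒳)
    (hxstarfeas : ∀ t, 1 ≤ t → t ≤ T → ∀ n, g t n xstar ≤ 0) :
    ∑ t ∈ Finset.Icc 1 T, (f t (x t) - f t xstar) ≤
        (D ^ 2 / (4 * μ)) * ∑ t ∈ Finset.Icc 1 T, (1 / (t : ℝ)) + D * R ∧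
      (D ^ 2 / (4 * μ)) * ∑ t ∈ Finset.Icc 1 T, (1 / (t : ℝ)) + D * R ≤
        (D ^ 2 / (4 * μ)) * (1 + Real.log T) + D * R :=
  coldq_log_static_regret_strongly_convex_general p N T hT R D μ hμ 𝒳 hXconv hXbdd f gradf hgradD
    hstrong g hgconv α hα Q hQnn x hx1 hxX hxmin xstar hxstarX hxstarfeas
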